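/- In the essential intersection type system, if Γ ⊢ λx.M : μ for a strict type μ, then there exist σ and ν such that μ ∼ σ → ν and Γ, x : σ ⊢ M : ν. -/

import Mathlib

/-- Terms of the λ⊥-calculus (de Bruijn indices). -/
inductive Tm : Type
  | var : ℕ → Tm
  | bot : Tm
  | lam : Tm → Tm
  | app : Tm → Tm → Tm
  deriving DecidableEq

namespace Tm

/-- Lift (shift by one) all de Bruijn indices ≥ k. -/
def lift : Tm → ℕ → Tm
  | var n, k => if n < k then var n else var (n+1)
  | bot, _ => bot
  | lam M, k => lam (lift M (k+1))
  | app M N, k => app (lift M k) (lift N k)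

/-- Capture-avoiding substitution of N for variable k. -/
def subst : Tm → ℕ → Tm → Tm
  | var n, k, N => if n < k then var n else if n = k then N else var (n-1)
  | bot, _, _ => bot
  | lam M, k, N => lam (subst M (k+1) (lift N 0))
  | app M P, k, N => app (subst M k N) (subst P k N)

/-- One-step β⊥-reduction (compatible closure). -/
inductive Step : Tm → Tm → Prop
  | beta (M N : Tm) : Step (app (lam M) N) (subst M 0 N)
  | botApp (N : Tm) : Step (app bot N) bot
  | botLam : Step (lam bot) bot
  | appL {M M'} (N) : Step M M' → Step (app M N) (app M' N)
  | appR (M) {N N'} : Step N N' → Step (app M N) (app M N')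
  | lamC {M M'} : Step M M' → Step (lam M) (lam M')

/-- Multi-step reduction. -/
def Red : Tm → Tm → Prop := Relation.ReflTransGen Step

/-- β⊥-conversion: M = N iff they have a common reduct. -/
def Conv (M N : Tm) : Prop := ∃ P, Red M P ∧ Red N P

/-- The identity combinator I = λx.x. -/
def iTm : Tm := lam (var 0)

/-- Composition M ∘ N = λz.M(Nz). -/
def comp (M N : Tm) : Tm := lam (app (lift M 0) (app (lift N 0) (var 0)))

/-- Apply M to a list of arguments. -/
def applist (M : Tm) (Ms : List Tm) : Tm := Ms.foldl app M

/-- Iterated λ-abstraction. -/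
def iterLam : ℕ → Tm → Tm
  | 0, M => M
  | n+1, M => lam (iterLam n M)

/-- The selector λt x₁ … xₘ. t  (a simple right inverse). -/
def sel (m : ℕ) : Tm := iterLam (m+1) (var m)

/-- Number of initial λ-abstractions of a term. -/
def leadLams : Tm → ℕ
  | lam M => leadLams M + 1
  | _ => 0

end Tm

mutual
/-- Strict intersection types μ ::= φ | ω | σ → μ. -/
inductive STy : Type
  | tvar : ℕ → STy
  | omega : STy
  | arrow : ITy → STy → STy
/-- Intersections σ ::= μ | σ ∧ σ. -/
inductive ITy : Type
  | strict : STy → ITy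
  | inter : ITy → ITy → ITy
end

/-- The subtyping preorder on (strict) intersection types. -/
inductive SubTy : ITy → ITy → Prop
  | refl (σ) : SubTy σ σ
  | trans {σ τ ρ} : SubTy σ τ → SubTy τ ρ → SubTy σ ρ
  | toOmega (σ) : SubTy σ (.strict .omega)
  | omegaArr : SubTy (.strict .omega) (.strict (.arrow (.strict .omega) .omega))
  | interL (σ τ) : SubTy (.inter σ τ) σ
  | interR (σ τ) : SubTy (.inter σ τ) τ
  | interMono {σ₁ σ₂ τ₁ τ₂} : SubTy σ₁ τ₁ → SubTy σ₂ τ₂ → SubTy (.inter σ₁ σ₂) (.inter τ₁ τ₂)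
  | arrow {σ τ : ITy} {μ ν : STy} : SubTy τ σ → SubTy (.strict μ) (.strict ν) →
      SubTy (.strict (.arrow σ μ)) (.strict (.arrow τ ν))

/-- σ ∼ τ : mutual subtyping. -/
def EqvTy (σ τ : ITy) : Prop := SubTy σ τ ∧ SubTy τ σ

/-- μ is a conjunct (component) of the intersection σ. -/
inductive IsComp : STy → ITy → Prop
  | strict (μ) : IsComp μ (.strict μ)
  | left {μ σ} (τ) : IsComp μ σ → IsComp μ (.inter σ τ)
  | right {μ τ} (σ) : IsComp μ τ → IsComp μ (.inter σ τ)

/-- The essential intersection type assignment system (contexts are de Bruijn lists). -/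
inductive Der : List ITy → Tm → STy → Prop
  | var {Γ n σ μ} : Γ[n]? = some σ → IsComp μ σ → Der Γ (.var n) μ
  | omega (Γ M) : Der Γ M .omega
  | sub {Γ M μ ν} : Der Γ M μ → SubTy (.strict μ) (.strict ν) → Der Γ M ν
  | lam {Γ M σ μ} : Der (σ :: Γ) M μ → Der Γ (.lam M) (.arrow σ μ)
  | app {Γ M N σ μ} : Der Γ M (.arrow σ μ) → (∀ ν, IsComp ν σ → Der Γ N ν) →
      Der Γ (.app M N) μ

/-- A strict type is inhabited if some closed term has it. -/
def InhabS (μ : STy) : Prop := ∃ M, Der [] M μ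

/-- An intersection is inhabited if a single closed term has all its conjuncts. -/
def InhabI (σ : ITy) : Prop := ∃ M, ∀ μ, IsComp μ σ → Der [] M μ

/-- σ → ρ is inhabited: one term inhabits σ → μ for every conjunct μ of ρ. -/
def InhabArrow (σ ρ : ITy) : Prop := ∃ M, ∀ μ, IsComp μ ρ → Der [] M (.arrow σ μ)

/-- ρ₁ → … → ρₘ → μ. -/
def arrows (l : List ITy) (μ : STy) : STy := l.foldr .arrow μ

/-- μ ◁ ν : μ is a retract of ν. -/
def Retract (μ ν : STy) : Prop :=
  ∃ L R, Der [] L (.arrow (.strict ν) μ) ∧ Der [] R (.arrow (.strict μ) ν) ∧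
    Tm.Conv (Tm.comp L R) Tm.iTm

/-!
Subtyping between strict types has a cut-free syntactic description (`StrictLe`): `μ ≤ ν` iff
`μ = ν`, or `ν` is ω-like (`σ₁ → … → σₖ → ω`, a supertype of `ω`), or both are arrows with
contravariant sources and covariant targets. Hence a strict supertype of an arrow `σ → ρ` is either
ω-like or an arrow `τ → κ` with `τ ≤ σ` and `ρ ≤ κ`. By induction on the derivation, a strict
type of `λx.M` is therefore either ω-like, and so equivalent to `ω → ω`, or an arrow `σ → ν`
with `Γ, x : σ ⊢ M : ν`, where subsumption steps are absorbed by narrowing the context.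
-/

inductive OmegaLike : STy → Prop
  | omega : OmegaLike .omega
  | arrow (σ) {μ} : OmegaLike μ → OmegaLike (.arrow σ μ)

theorem OmegaLike.omega_le {μ : STy} (h : OmegaLike μ) : SubTy (.strict .omega) (.strict μ) := by
  induction h with
  | omega => exact SubTy.refl _
  | arrow σ _ ih => exact SubTy.trans SubTy.omegaArr (SubTy.arrow (SubTy.toOmega σ) ih)

theorem OmegaLike.eqvTy_omega_arrow {μ : STy} (h : OmegaLike μ) :
    EqvTy (.strict μ) (.strict (.arrow (.strict .omega) .omega)) :=
  ⟨SubTy.trans (SubTy.toOmega _) SubTy.omegaArr, SubTy.trans (SubTy.toOmega _) h.omega_le⟩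

theorem Der.of_omegaLike (Γ : List ITy) (M : Tm) {μ : STy} (h : OmegaLike μ) : Der Γ M μ :=
  Der.sub (Der.omega Γ M) h.omega_le

theorem IsComp.le {μ : STy} {σ : ITy} (h : IsComp μ σ) : SubTy σ (.strict μ) := by
  induction h with
  | strict => exact SubTy.refl _
  | left τ _ ih => exact SubTy.trans (SubTy.interL _ _) ih
  | right τ _ ih => exact SubTy.trans (SubTy.interR _ _) ih

inductive StrictLe : STy → STy → Prop
  | refl (μ) : StrictLe μ μ
  | omegaLike {μ ν} : OmegaLike ν → StrictLe μ ν
  | arrow {σ ρ τ κ} : SubTy τ σ → StrictLe ρ κ → StrictLe (.arrow σ ρ) (.arrow τ κ)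

namespace StrictLe

theorem subTy {μ ν : STy} (h : StrictLe μ ν) : SubTy (.strict μ) (.strict ν) := by
  induction h with
  | refl μ => exact SubTy.refl _
  | omegaLike hν => exact SubTy.trans (SubTy.toOmega _) hν.omega_le
  | arrow hτσ _ ih => exact SubTy.arrow hτσ ih

theorem omegaLike_of_omegaLike {μ ν : STy} (h : StrictLe μ ν) (hμ : OmegaLike μ) :
    OmegaLike ν := by
  induction h with
  | refl => exact hμ
  | omegaLike hν => exact hν
  | arrow _ _ ih =>
      cases hμ with
      | arrow _ hρ => exact OmegaLike.arrow _ (ih hρ)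

theorem trans {μ ν ρ : STy} (h₁ : StrictLe μ ν) (h₂ : StrictLe ν ρ) :
    StrictLe μ ρ := by
  induction h₁ generalizing ρ with
  | refl => exact h₂
  | omegaLike hν => exact StrictLe.omegaLike (h₂.omegaLike_of_omegaLike hν)
  | arrow hτσ hρκ ih =>
      cases h₂ with
      | refl => exact StrictLe.arrow hτσ hρκ
      | omegaLike hρ => exact StrictLe.omegaLike hρ
      | arrow hτσ' hκ => exact StrictLe.arrow (SubTy.trans hτσ' hτσ) (ih hκ)

end StrictLe

theorem SubTy.exists_strictLe {σ τ : ITy} (h : SubTy σ τ) :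
    ∀ ν, IsComp ν τ → OmegaLike ν ∨ ∃ μ, IsComp μ σ ∧ StrictLe μ ν := by
  induction h with
  | refl σ => exact fun ν hν => Or.inr ⟨ν, hν, StrictLe.refl ν⟩
  | trans _ _ ih₁ ih₂ =>
      intro ν hν
      rcases ih₂ ν hν with hω | ⟨μ', hμ', hμ'ν⟩
      · exact Or.inl hω
      · rcases ih₁ μ' hμ' with hω | ⟨μ, hμ, hμμ'⟩
        · exact Or.inl (hμ'ν.omegaLike_of_omegaLike hω)
        · exact Or.inr ⟨μ, hμ, hμμ'.trans hμ'ν⟩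
  | toOmega σ =>
      rintro ν ⟨⟩
      exact Or.inl OmegaLike.omega
  | omegaArr =>
      rintro ν ⟨⟩
      exact Or.inl (OmegaLike.arrow _ OmegaLike.omega)
  | interL σ τ => exact fun ν hν => Or.inr ⟨ν, IsComp.left _ hν, StrictLe.refl ν⟩
  | interR σ τ => exact fun ν hν => Or.inr ⟨ν, IsComp.right _ hν, StrictLe.refl ν⟩
  | interMono _ _ ih₁ ih₂ =>
      intro ν hν
      cases hν with
      | left _ hν =>
          exact (ih₁ ν hν).imp_right fun ⟨μ, hμ, hμν⟩ => ⟨μ, IsComp.left _ hμ, hμν⟩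
      | right _ hν =>
          exact (ih₂ ν hν).imp_right fun ⟨μ, hμ, hμν⟩ => ⟨μ, IsComp.right _ hμ, hμν⟩
  | @arrow σ τ μ ν hτσ _ _ ih =>
      rintro _ ⟨⟩
      rcases ih ν (IsComp.strict ν) with hω | ⟨_, ⟨⟩, hμν⟩
      · exact Or.inl (OmegaLike.arrow _ hω)
      · exact Or.inr ⟨_, IsComp.strict _, StrictLe.arrow hτσ hμν⟩

theorem subTy_strict_iff {μ ν : STy} : SubTy (.strict μ) (.strict ν) ↔ StrictLe μ ν := by
  refine ⟨fun h => ?_, StrictLe.subTy⟩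
  rcases h.exists_strictLe ν (IsComp.strict ν) with hω | ⟨_, ⟨⟩, hμν⟩
  · exact StrictLe.omegaLike hω
  · exact hμν

theorem List.Forall₂.exists_getElem?_of_getElem? {α β : Type*} {R : α → β → Prop}
    {l₁ : List α} {l₂ : List β} (h : List.Forall₂ R l₁ l₂) {n : ℕ} {b : β}
    (hb : l₂[n]? = some b) : ∃ a, l₁[n]? = some a ∧ R a b := by
  induction h generalizing n with
  | nil => simp at hb
  | cons hab _ ih =>
      cases n with
      | zero => exact ⟨_, rfl, (Option.some.inj hb) ▸ hab⟩
      | succ n => exact ih hb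

theorem Der.mono_ctx {Γ Γ' : List ITy} {M : Tm} {μ : STy} (h : Der Γ M μ)
    (hΓ : List.Forall₂ SubTy Γ' Γ) : Der Γ' M μ := by
  induction h generalizing Γ' with
  | var hn hμ =>
      obtain ⟨σ', hn', hσ'⟩ := hΓ.exists_getElem?_of_getElem? hn
      rcases (SubTy.trans hσ' hμ.le).exists_strictLe _ (IsComp.strict _) with
        hω | ⟨μ', hμ', hμ'μ⟩
      · exact Der.of_omegaLike _ _ hω
      · exact Der.sub (Der.var hn' hμ') hμ'μ.subTy
  | omega Γ M => exact Der.omega Γ' M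
  | sub _ hμν ih => exact Der.sub (ih hΓ) hμν
  | lam _ ih => exact Der.lam (ih (List.Forall₂.cons (SubTy.refl _) hΓ))
  | app _ _ ih₁ ih₂ => exact Der.app (ih₁ hΓ) fun ν hν => ih₂ ν hν hΓ

theorem Der.omegaLike_or_arrow_of_lam {Γ : List ITy} {M : Tm} {μ : STy}
    (h : Der Γ (.lam M) μ) :
    OmegaLike μ ∨ ∃ σ ν, μ = .arrow σ ν ∧ Der (σ :: Γ) M ν := by
  generalize hL : Tm.lam M = L at h
  induction h with
  | var _ _ => cases hL
  | omega => exact Or.inl OmegaLike.omega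
  | app _ _ _ _ => cases hL
  | lam hM _ =>
      cases hL
      exact Or.inr ⟨_, _, rfl, hM⟩
  | @sub Δ _ _ _ _ hμν ih =>
      have hμν := subTy_strict_iff.mp hμν
      rcases ih hL with hω | ⟨σ, ρ, rfl, hM⟩
      · exact Or.inl (hμν.omegaLike_of_omegaLike hω)
      cases hμν with
      | refl => exact Or.inr ⟨σ, ρ, rfl, hM⟩
      | omegaLike hω => exact Or.inl hω
      | arrow hτσ hρκ =>
          have hΓ : List.Forall₂ SubTy (_ :: Δ) (σ :: Δ) :=
            List.Forall₂.cons hτσ (List.forall₂_same.mpr fun τ _ => SubTy.refl τ)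
          exact Or.inr ⟨_, _, rfl, Der.sub (hM.mono_ctx hΓ) hρκ.subTy⟩

/-- inversion for abstractions. -/
theorem inversion_lam {Γ : List ITy} {M : Tm} {μ : STy} (h : Der Γ (.lam M) μ) :
    ∃ σ ν, EqvTy (.strict μ) (.strict (.arrow σ ν)) ∧ Der (σ :: Γ) M ν := by
  rcases h.omegaLike_or_arrow_of_lam with hω | ⟨σ, ν, rfl, hM⟩
  · exact ⟨_, _, hω.eqvTy_omega_arrow, Der.omega _ _⟩
  · exact ⟨σ, ν, ⟨SubTy.refl _, SubTy.refl _⟩, hM⟩
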